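/- arXiv:1912.08286 — 2 statements merged into one kernel-verified Lean document; each statement's English description precedes it below -/
import Mathlib

section
/- In over-parameterized fixed-design linear regression, the average over the training inputs of the total prediction variance equals (r/m)σ², where r = rank(X); in particular it is bounded independently of the number of parameters N. This uses that P⊥xᵢ = 0 for each training point xᵢ and Tr(ΣΣ⁺) = rank(X). -/
/-! At a training input the prior term `xᵢᵀ P⊥ θ₀` vanishes because `X P⊥ = 0`, so the prediction
there is `(H Y)ᵢ` with `H = X Σ⁺ Xᵀ`, and its variance is `σ² ∑ⱼ Hᵢⱼ²`. From
`Σ Σ⁺ Σ = Σ` (with `Σ = XᵀX`) one gets `H X = X`, hence `H Hᵀ = Hᵀ`: `H` is the orthogonal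
projection onto the column space of `X`. So `∑ᵢⱼ Hᵢⱼ² = tr (H Hᵀ) = tr H = rank H = rank X`. -/

open MeasureTheory ProbabilityTheory Matrix
open scoped NNReal ENNReal

namespace Matrix

variable {m n R : Type*} [Fintype m] [Fintype n]

theorem mul_mul_conjTranspose_mul_self_eq_self [DecidableEq n] [PartialOrder R] [Ring R]
    [StarRing R] [StarOrderedRing R] [NoZeroDivisors R] {A : Matrix m n R} {S : Matrix n n R}
    (h : Aᴴ * A * S * (Aᴴ * A) = Aᴴ * A) : A * S * (Aᴴ * A) = A := by
  have hgram : Aᴴ * A * (S * (Aᴴ * A) - 1) = 0 := by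
    rw [Matrix.mul_sub, Matrix.mul_one, ← Matrix.mul_assoc, h, sub_self]
  rwa [conjTranspose_mul_self_mul_eq_zero, Matrix.mul_sub, Matrix.mul_one, sub_eq_zero,
    ← Matrix.mul_assoc] at hgram

theorem transpose_eq_self_of_mul_transpose_eq_transpose [CommSemiring R] {H : Matrix n n R}
    (h : H * Hᵀ = Hᵀ) : Hᵀ = H :=
  calc Hᵀ = (H * Hᵀ)ᵀ := by rw [transpose_mul, transpose_transpose, h]
    _ = H := by rw [h, transpose_transpose]

theorem isIdempotentElem_of_mul_transpose_eq_transpose [CommSemiring R] {H : Matrix n n R}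
    (h : H * Hᵀ = Hᵀ) : IsIdempotentElem H := by
  rwa [transpose_eq_self_of_mul_transpose_eq_transpose h] at h

theorem trace_mul_transpose_self [CommSemiring R] (A : Matrix m n R) :
    (A * Aᵀ).trace = ∑ i, ∑ j, A i j ^ 2 := by
  simp only [trace, diag, mul_apply, transpose_apply, sq]

theorem trace_eq_rank_of_isIdempotentElem [DecidableEq n] [Field R] {A : Matrix n n R}
    (hA : IsIdempotentElem A) : A.trace = A.rank := by
  have hA' : IsIdempotentElem (toLin' A) := hA.map toLinAlgEquiv'
  rw [← trace_toLin'_eq, ((LinearMap.isProj_range_iff_isIdempotentElem _).mpr hA').trace]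
  rfl

section Real

variable [DecidableEq n] {X : Matrix m n ℝ} {S : Matrix n n ℝ}

theorem mul_mul_transpose_mul_self_eq_self (h : Xᵀ * X * S * (Xᵀ * X) = Xᵀ * X) :
    X * S * Xᵀ * X = X := by
  simp only [← conjTranspose_eq_transpose_of_trivial] at h ⊢
  rw [Matrix.mul_assoc _ Xᴴ]
  exact mul_mul_conjTranspose_mul_self_eq_self h

theorem sum_sq_mul_mul_transpose_eq_rank [DecidableEq m] (h : Xᵀ * X * S * (Xᵀ * X) = Xᵀ * X) :
    ∑ i, ∑ j, (X * S * Xᵀ) i j ^ 2 = X.rank := by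
  set H := X * S * Xᵀ with hH
  have hHX : H * X = X := mul_mul_transpose_mul_self_eq_self h
  have hHHt : H * Hᵀ = Hᵀ := by
    rw [hH, transpose_mul, transpose_transpose, ← Matrix.mul_assoc,
      mul_mul_transpose_mul_self_eq_self h]
  have hrank : H.rank = X.rank := by
    refine le_antisymm (by rw [hH, Matrix.mul_assoc]; exact rank_mul_le_left _ _) ?_
    calc X.rank = (H * X).rank := by rw [hHX]
      _ ≤ H.rank := rank_mul_le_left _ _
  rw [← trace_mul_transpose_self, hHHt, trace_transpose,
    trace_eq_rank_of_isIdempotentElem (isIdempotentElem_of_mul_transpose_eq_transpose hHHt), hrank]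

end Real

end Matrix

namespace ProbabilityTheory

variable {Ω ι : Type*} [MeasurableSpace Ω] {μ : Measure Ω} [IsProbabilityMeasure μ]
  [Fintype ι] [DecidableEq ι] {ε : Ω → ι → ℝ} {σ : ℝ}

theorem variance_const_add_sum_mul
    (hε : ∀ i, MemLp (fun ω => ε ω i) 2 μ) (hmean : ∀ i, ∫ ω, ε ω i ∂μ = 0)
    (hcov : ∀ i j, ∫ ω, ε ω i * ε ω j ∂μ = σ ^ 2 * (if i = j then 1 else 0))
    (c : ℝ) (a : ι → ℝ) :
    Var[fun ω => c + ∑ j, a j * ε ω j; μ] = σ ^ 2 * ∑ j, a j ^ 2 := by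
  have hcov' : ∀ i j,
      cov[fun ω => ε ω i, fun ω => ε ω j; μ] = σ ^ 2 * (if i = j then 1 else 0) := by
    intro i j
    rw [covariance_eq_sub (hε i) (hε j), hmean, zero_mul, sub_zero, ← hcov]
    rfl
  have hsum : MemLp (fun ω => ∑ j, a j * ε ω j) 2 μ :=
    memLp_finsetSum _ fun j _ => (hε j).const_mul (a j)
  rw [variance_const_add hsum.aestronglyMeasurable, ← covariance_self hsum.aemeasurable,
    covariance_fun_sum_fun_sum (fun j => (hε j).const_mul (a j))
      (fun j => (hε j).const_mul (a j))]
  simp only [covariance_const_mul_left, covariance_const_mul_right, hcov', mul_ite, mul_one,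
    mul_zero, Finset.sum_ite_eq, Finset.mem_univ, if_true, Finset.mul_sum]
  exact Finset.sum_congr rfl fun j _ => by ring

end ProbabilityTheory

theorem overparam_average_prediction_variance_general
    {Ω : Type*} [MeasurableSpace Ω] (μ : Measure Ω) [IsProbabilityMeasure μ]
    (m N : ℕ)
    (X : Matrix (Fin m) (Fin N) ℝ) (θ : Fin N → ℝ) (σ : ℝ)
    (Sp : Matrix (Fin N) (Fin N) ℝ)
    (hp1 : (Xᵀ * X) * Sp * (Xᵀ * X) = Xᵀ * X)
    (Pperp : Matrix (Fin N) (Fin N) ℝ) (hP : Pperp = 1 - Sp * (Xᵀ * X))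
    (θ₀ : Ω → Fin N → ℝ)
    (ε : Ω → Fin m → ℝ)
    (hεmeas : ∀ i, MemLp (fun ω => ε ω i) 2 μ)
    (hεmean : ∀ i, ∫ ω, ε ω i ∂μ = 0)
    (hεcov : ∀ i j, ∫ ω, ε ω i * ε ω j ∂μ = σ ^ 2 * (if i = j then 1 else 0)) :
    (1 / (m : ℝ)) * ∑ i : Fin m,
        variance (fun ω =>
          (X i) ⬝ᵥ (Pperp *ᵥ θ₀ ω + Sp *ᵥ (Xᵀ *ᵥ (X *ᵥ θ + ε ω)))) μ
      = σ ^ 2 * (X.rank : ℝ) / m := by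
  have hXP : X * Pperp = 0 := by
    rw [hP, Matrix.mul_sub, Matrix.mul_one, ← Matrix.mul_assoc, ← Matrix.mul_assoc,
      Matrix.mul_mul_transpose_mul_self_eq_self hp1, sub_self]
  have hrow : ∀ i ω, X i ⬝ᵥ (Pperp *ᵥ θ₀ ω + Sp *ᵥ (Xᵀ *ᵥ (X *ᵥ θ + ε ω)))
      = ((X * Sp * Xᵀ) *ᵥ (X *ᵥ θ)) i + ∑ j, (X * Sp * Xᵀ) i j * ε ω j := by
    intro i ω
    change (X *ᵥ _) i = _
    rw [mulVec_add, mulVec_mulVec, hXP, zero_mulVec, zero_add, mulVec_mulVec, mulVec_mulVec,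
      mulVec_add]
    rfl
  simp_rw [hrow, variance_const_add_sum_mul hεmeas hεmean hεcov, ← Finset.mul_sum,
    Matrix.sum_sq_mul_mul_transpose_eq_rank hp1]
  ring

/-- In over-parameterized fixed-design linear regression, the average over the training
inputs (rows of `X`) of the total prediction variance equals `σ²·rank(X)/m`; in particular
it is bounded independently of the number of parameters `N`. -/
theorem overparam_average_prediction_variance
    {Ω : Type*} [MeasurableSpace Ω] (μ : Measure Ω) [IsProbabilityMeasure μ]
    (m N : ℕ) (hmN : m < N) (hm : 0 < m)
    (X : Matrix (Fin m) (Fin N) ℝ) (θ : Fin N → ℝ) (σ : ℝ)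
    (Sp : Matrix (Fin N) (Fin N) ℝ)
    (hp1 : (Xᵀ * X) * Sp * (Xᵀ * X) = Xᵀ * X)
    (hp2 : Sp * (Xᵀ * X) * Sp = Sp)
    (hp3 : ((Xᵀ * X) * Sp)ᵀ = (Xᵀ * X) * Sp)
    (hp4 : (Sp * (Xᵀ * X))ᵀ = Sp * (Xᵀ * X))
    (Pperp : Matrix (Fin N) (Fin N) ℝ) (hP : Pperp = 1 - Sp * (Xᵀ * X))
    (θ₀ : Ω → Fin N → ℝ) (hθ₀meas : Measurable θ₀)
    (hθ₀ : Measure.map θ₀ μ = Measure.pi fun _ : Fin N => gaussianReal 0 (N : ℝ≥0)⁻¹)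
    (ε : Ω → Fin m → ℝ)
    (hεmeas : ∀ i, MemLp (fun ω => ε ω i) 2 μ)
    (hεmean : ∀ i, ∫ ω, ε ω i ∂μ = 0)
    (hεcov : ∀ i j, ∫ ω, ε ω i * ε ω j ∂μ = σ ^ 2 * (if i = j then 1 else 0))
    (hindep : IndepFun θ₀ ε μ) :
    (1 / (m : ℝ)) * ∑ i : Fin m,
        variance (fun ω =>
          (X i) ⬝ᵥ (Pperp *ᵥ θ₀ ω + Sp *ᵥ (Xᵀ *ᵥ (X *ᵥ θ + ε ω)))) μ
      = σ ^ 2 * (X.rank : ℝ) / m :=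
  overparam_average_prediction_variance_general μ m N X θ σ Sp hp1 Pperp hP θ₀ ε hεmeas hεmean hεcov
end

section
/- The gradient-descent solution in over-parameterized least squares is the minimizer of ‖θ - θ₀‖ among all minimizers of the training loss: if X has rank m < N, the set of θ with Xθ = Y is nonempty, and the closest point to θ₀ in this set equals P⊥θ₀ + Σ⁺XᵀY, where Σ = XᵀX, P⊥ projects onto ker(X). -/
open Matrix

lemma cancel_XtX {m N : ℕ} (X : Matrix (Fin m) (Fin N) ℝ) (u : Fin N → ℝ)
    (h : Xᵀ *ᵥ (X *ᵥ u) = 0) : X *ᵥ u = 0 := by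
  have h2 : (X *ᵥ u) ⬝ᵥ (X *ᵥ u) = 0 := by
    rw [dotProduct_mulVec]
    rw [Matrix.mulVec_transpose] at h
    rw [h, zero_dotProduct]
  exact (dotProduct_self_eq_zero).mp h2

lemma surj_of_rank {m N : ℕ} (X : Matrix (Fin m) (Fin N) ℝ) (hrank : X.rank = m)
    (Y : Fin m → ℝ) : ∃ w, X *ᵥ w = Y := by
  have htop : LinearMap.range X.mulVecLin = ⊤ := by
    apply Submodule.eq_top_of_finrank_eq
    rw [← Matrix.rank, hrank, Module.finrank_pi]
    simp
  have : Y ∈ LinearMap.range X.mulVecLin := htop ▸ Submodule.mem_top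
  obtain ⟨w, hw⟩ := this
  exact ⟨w, hw⟩

/-- The gradient-descent solution of over-parameterized least squares is the minimizer of
`‖θ - θ₀‖` among interpolating solutions: if `rank X = m < N`, the set `{θ | Xθ = Y}` is
nonempty and the point `P⊥θ₀ + Σ⁺XᵀY` (with `Σ = XᵀX`, `Σ⁺` its Moore–Penrose
pseudoinverse, `P⊥ = I - Σ⁺Σ` the projection onto `ker X`) belongs to it and is closest
to `θ₀` in Euclidean norm. -/
theorem gd_solution_is_min_norm_interpolant
    (m N : ℕ) (hmN : m < N)
    (X : Matrix (Fin m) (Fin N) ℝ) (hrank : X.rank = m)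
    (Y : Fin m → ℝ) (θ₀ : Fin N → ℝ)
    (Sp : Matrix (Fin N) (Fin N) ℝ)
    (hp1 : (Xᵀ * X) * Sp * (Xᵀ * X) = Xᵀ * X)
    (hp2 : Sp * (Xᵀ * X) * Sp = Sp)
    (hp3 : ((Xᵀ * X) * Sp)ᵀ = (Xᵀ * X) * Sp)
    (hp4 : (Sp * (Xᵀ * X))ᵀ = Sp * (Xᵀ * X))
    (Pperp : Matrix (Fin N) (Fin N) ℝ) (hP : Pperp = 1 - Sp * (Xᵀ * X)) :
    {θ : Fin N → ℝ | X *ᵥ θ = Y}.Nonempty ∧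
    X *ᵥ (Pperp *ᵥ θ₀ + Sp *ᵥ (Xᵀ *ᵥ Y)) = Y ∧
    ∀ θ : Fin N → ℝ, X *ᵥ θ = Y →
      Real.sqrt (∑ i, ((Pperp *ᵥ θ₀ + Sp *ᵥ (Xᵀ *ᵥ Y)) i - θ₀ i) ^ 2)
        ≤ Real.sqrt (∑ i, (θ i - θ₀ i) ^ 2) := by
  set Q : Matrix (Fin N) (Fin N) ℝ := Sp * (Xᵀ * X) with hQ
  obtain ⟨w, hw⟩ := surj_of_rank X hrank Y
  -- X * Q = X (as actions)
  have hXQ : ∀ v : Fin N → ℝ, X *ᵥ (Q *ᵥ v) = X *ᵥ v := by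
    intro v
    have hm : Xᵀ * X * Q = Xᵀ * X := by rw [hQ, ← Matrix.mul_assoc]; exact hp1
    have h0 : Xᵀ *ᵥ (X *ᵥ (Q *ᵥ v - v)) = 0 := by
      calc Xᵀ *ᵥ (X *ᵥ (Q *ᵥ v - v))
          = (Xᵀ * X * Q) *ᵥ v - (Xᵀ * X) *ᵥ v := by
            simp [mulVec_sub, mulVec_mulVec, Matrix.mul_assoc]
        _ = 0 := by rw [hm, sub_self]
    have h1 := cancel_XtX X (Q *ᵥ v - v) h0
    rw [mulVec_sub] at h1
    exact sub_eq_zero.mp h1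
  -- the candidate point
  set θs : Fin N → ℝ := Pperp *ᵥ θ₀ + Sp *ᵥ (Xᵀ *ᵥ Y) with hθs
  have hθs' : θs = θ₀ - Q *ᵥ θ₀ + Q *ᵥ w := by
    rw [hθs, hP, sub_mulVec, one_mulVec, ← hw, mulVec_mulVec, mulVec_mulVec,
      Matrix.mul_assoc, hQ]
  -- θs interpolates
  have hmem : X *ᵥ θs = Y := by
    rw [hθs', mulVec_add, mulVec_sub, hXQ, hXQ, sub_self, zero_add, hw]
  refine ⟨⟨θs, hmem⟩, hmem, ?_⟩
  intro θ hθ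
  -- decomposition
  set a : Fin N → ℝ := θ - θs with ha
  set b : Fin N → ℝ := θs - θ₀ with hb
  have hXa : X *ᵥ a = 0 := by
    rw [ha, mulVec_sub, hθ, hmem, sub_self]
  have hQa : Q *ᵥ a = 0 := by
    rw [hQ, ← mulVec_mulVec, ← mulVec_mulVec, hXa]
    simp
  have hbQ : b = Q *ᵥ (w - θ₀) := by
    rw [hb, hθs', mulVec_sub]
    abel
  have hcross : a ⬝ᵥ b = 0 := by
    rw [hbQ, dotProduct_mulVec]
    have : a ᵥ* Q = Q *ᵥ a := by
      conv_lhs => rw [← hp4]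
      rw [Matrix.vecMul_transpose]
    rw [this, hQa, zero_dotProduct]
  have hcross' : ∑ i, a i * b i = 0 := hcross
  have hsum : ∑ i, (θ i - θ₀ i) ^ 2
      = ∑ i, (a i) ^ 2 + 2 * ∑ i, a i * b i + ∑ i, (b i) ^ 2 := by
    rw [Finset.mul_sum, ← Finset.sum_add_distrib, ← Finset.sum_add_distrib]
    apply Finset.sum_congr rfl
    intro i _
    have : θ i - θ₀ i = a i + b i := by simp [ha, hb]
    rw [this]; ring
  have hle : ∑ i, (θs i - θ₀ i) ^ 2 ≤ ∑ i, (θ i - θ₀ i) ^ 2 := by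
    rw [hsum, hcross']
    have h1 : (0:ℝ) ≤ ∑ i, (a i) ^ 2 := Finset.sum_nonneg fun i _ => sq_nonneg _
    have : ∀ i, θs i - θ₀ i = b i := fun i => by simp [hb]
    simp only [this]
    linarith
  exact Real.sqrt_le_sqrt hle
end
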